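/- arXiv:2602.15308 — 4 statements merged into one kernel-verified Lean document; each statement's English description precedes it below -/
import Mathlib

section
/- For all α, β ∈ (0,1) and every odd positive integer n, A_n(α,β,1) > 0. -/
/-!
`A_n(α,β,1)` is the `n`-th coefficient of `F = (1+z)^α (1-z)^(-β)`, and
`(1 - z²) F' = ((α+β) + (β-α) z) F`, which gives the three-term recurrence
`(n+2) a_{n+2} = (α+β) a_{n+1} + (n+β-α) a_n`. Along odd `n` the pair of conditions
`a_n > 0` and `(n+1) a_{n+1} + (n-α) a_n ≥ 0` propagates from `n` to `n+2` (the second quantity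
is the `n`-th coefficient of `(1+z) F' - α F = β (1+z)^(α+1) (1-z)^(-β-1)`), and both hold at
`n = 1`.
Even coefficients can be negative, which is why the induction runs in steps of two.
-/

open Real MeasureTheory Set Finset

noncomputable section

/-- Generalized binomial coefficient `C(α,k) = (∏_{j=0}^{k-1} (α-j)) / k!`. -/
def genBinom (α : ℝ) (k : ℕ) : ℝ :=
  (∏ j ∈ Finset.range k, (α - j)) / (Nat.factorial k)

/-- Ascending Pochhammer symbol `(a)_k = a (a+1) ⋯ (a+k-1)`. -/
def pochh (a : ℝ) (k : ℕ) : ℝ := ∏ j ∈ Finset.range k, (a + j)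

/-- `A_n(α,β,ω)`, the `n`-th Maclaurin coefficient of `(1+ωz)^α (1-z)^(-β)`. -/
def brA (α β : ℝ) (ω : ℂ) (n : ℕ) : ℂ :=
  ∑ k ∈ Finset.range (n + 1),
    ((genBinom α k * (pochh β (n - k) / Nat.factorial (n - k)) : ℝ) : ℂ) * ω ^ k

/-- `A_n(α,β,x)` for real `x` (real-valued version). -/
def brAR (α β x : ℝ) (n : ℕ) : ℝ :=
  ∑ k ∈ Finset.range (n + 1),
    genBinom α k * (pochh β (n - k) / Nat.factorial (n - k)) * x ^ k

/-- `w_n(α,β,x)` for complex `x`. -/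
def wC (α β : ℝ) (n : ℕ) (x : ℂ) : ℂ :=
  ((Real.Gamma (n - α) * Real.Gamma (1 + α) * Real.sin (π * α) / Nat.factorial n : ℝ) : ℂ) *
    ∑ k ∈ Finset.range (n + 1),
      ((pochh β k * pochh (-(n : ℝ)) k / (pochh (α - n + 1) k * Nat.factorial k) : ℝ) : ℂ) * x ^ k

/-- `w_n(α,β,x)` for real `x` (real-valued version). -/
def wR (α β : ℝ) (n : ℕ) (x : ℝ) : ℝ :=
  (Real.Gamma (n - α) * Real.Gamma (1 + α) * Real.sin (π * α) / Nat.factorial n) *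
    ∑ k ∈ Finset.range (n + 1),
      pochh β k * pochh (-(n : ℝ)) k / (pochh (α - n + 1) k * Nat.factorial k) * x ^ k

/-- `R(s,φ) = √(e^{2s} + 1 - 2 e^s cos φ)`. -/
def Rker (s φ : ℝ) : ℝ := Real.sqrt (Real.exp (2 * s) + 1 - 2 * Real.exp s * Real.cos φ)

/-- `I₁(α,β,φ;n)`. -/
def brI1 (α β φ : ℝ) (n : ℕ) : ℝ :=
  ((π - φ) ^ 2)⁻¹ *
    ∫ s in Set.Ioi (0 : ℝ),
      (Real.exp s - 1) ^ (-β) * ((Real.exp s + 1) ^ α - Rker s φ ^ α) * Real.exp (-(n : ℝ) * s)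

/-- `I₂(α,β,φ;n)`. -/
def brI2 (α β φ : ℝ) (n : ℕ) : ℝ :=
  ((π - φ) ^ 2)⁻¹ *
    ∫ s in Set.Ioi (0 : ℝ),
      (Real.exp s - 1) ^ α * ((Real.exp s + 1) ^ (-β) - Rker s φ ^ (-β)) * Real.exp (-(n : ℝ) * s)

/-- `h(α,β,φ;n)`. -/
def hFun (α β φ : ℝ) (n : ℕ) : ℝ :=
  Real.sin (π * β) * brI1 α β φ n + Real.sin (π * α) * brI2 α β φ n

/-- `C₁(α,φ)`. -/
def C1f (α φ : ℝ) : ℝ :=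
  ((π - φ) ^ 2)⁻¹ * ((2 : ℝ) ^ α - (2 * Real.sin (φ / 2)) ^ α)

/-- `C₂(β,φ)`. -/
def C2f (β φ : ℝ) : ℝ :=
  ((π - φ) ^ 2)⁻¹ * ((2 * Real.sin (φ / 2)) ^ (-β) - (2 : ℝ) ^ (-β))

/-- `K₁(α,β,φ;s)`. -/
def K1f (α β φ s : ℝ) : ℝ :=
  (s ^ 2)⁻¹ *
    ((s / (Real.exp s - 1)) ^ β * ((Real.exp s + 1) ^ α - Rker s φ ^ α) /
        ((2 : ℝ) ^ α - (2 * Real.sin (φ / 2)) ^ α) - 1 - (α - β) / 2 * s)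

/-- `K₂(α,β,φ;s)`. -/
def K2f (α β φ s : ℝ) : ℝ :=
  (s ^ 2)⁻¹ *
    (((Real.exp s - 1) / s) ^ α * (Rker s φ ^ (-β) - (Real.exp s + 1) ^ (-β)) /
        ((2 * Real.sin (φ / 2)) ^ (-β) - (2 : ℝ) ^ (-β)) - 1 - (α - β) / 2 * s)

/-- `A₁(α,φ)`. -/
def A1f (α φ : ℝ) : ℝ :=
  (1 - α) * ((2 : ℝ) ^ α - (2 * Real.sin (φ / 2)) ^ α) /
    (Real.sin (π * α) * Real.Gamma (1 + α) * (π - φ) ^ 2)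

/-- `A₂(α,β,φ)`. -/
def A2f (α β φ : ℝ) : ℝ :=
  (1 - α) * Real.Gamma β * ((2 * Real.sin (φ / 2)) ^ (-β) - (2 : ℝ) ^ (-β)) /
    (π * (π - φ) ^ 2)

/-- `L(α,β,φ;s)`. -/
def Lf (α β φ s : ℝ) : ℝ :=
  s ^ 2 / (α + β) *
    (A1f α φ * K1f α β φ s / (Real.Gamma (1 - β) * s ^ β) -
      s ^ α * A2f α β φ * K2f α β φ s / Real.Gamma (1 + α))

/-- `E₀(α,β,φ;n)`. -/
def E0f (α β φ : ℝ) (n : ℕ) : ℝ :=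
  (n : ℝ) ^ (1 + α - β) * ∫ s in (0:ℝ)..1, Lf α β φ s * Real.exp (-(n : ℝ) * s)

/-- `E∞(α,β,φ;n)`. -/
def EInf (α β φ : ℝ) (n : ℕ) : ℝ :=
  (n : ℝ) ^ (1 + α - β) * ∫ s in Set.Ioi (1:ℝ), Lf α β φ s * Real.exp (-(n : ℝ) * s)

/-- Upper incomplete Gamma function `Γ(a,x) = ∫_x^∞ t^{a-1} e^{-t} dt`. -/
def iGamma (a x : ℝ) : ℝ := ∫ t in Set.Ioi x, t ^ (a - 1) * Real.exp (-t)

/-- `𝓗(α,β,φ;n)`. -/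
def Hf (α β φ : ℝ) (n : ℕ) : ℝ :=
  (1 - α) * (n : ℝ) ^ (1 + α - β) * hFun α β φ n /
    ((α + β) * Real.sin (π * α) * Real.sin (π * β) * Real.Gamma (1 - β) * Real.Gamma (1 + α))

/-- `𝓗⁽²⁾(α,β,φ;n)`. -/
def H2f (α β φ : ℝ) (n : ℕ) : ℝ :=
  (α + β)⁻¹ *
    (A1f α φ * (n : ℝ) ^ α * (1 + (α - β) * (1 - β) / (2 * n)) -
      A2f α β φ * (n : ℝ) ^ (-β) * (1 + (α - β) * (1 + α) / (2 * n)))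

/-- `P_n(α,β,φ;μ₀,μ∞)` for real `n > 0`. -/
def Pf (n α β φ μ0 μi : ℝ) : ℝ :=
  (α + β)⁻¹ *
      (A1f α φ * n ^ α * (1 + (α - β) * (1 - β) / (2 * n)) -
        A2f α β φ * n ^ (-β) * (1 + (α - β) * (1 + α) / (2 * n))) -
    μ0 * Real.Gamma (2 - β) * n ^ (α - 1) - μi * iGamma (3 + α) n * n ^ (-2 - β)

/-- `Q_n(α,β,φ)` for real `n > 0`. -/
def Qf (n α β φ : ℝ) : ℝ :=
  π * (α + β) * Real.sin (π * α) * Real.Gamma (1 + α) * (π - φ) ^ 2 /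
    ((1 - α) * Real.Gamma β * n ^ (1 + α - β))

/-- `F₁(α,β,φ)`. -/
def F1f (α β φ : ℝ) : ℝ :=
  (α + β)⁻¹ * (A1f α φ - max (1 - (α + β)) 0 * (5 : ℝ) ^ (-(α + β)) * A2f α β φ)

/-- `F₂(α,β,φ)`. -/
def F2f (α β φ : ℝ) : ℝ :=
  (α + β)⁻¹ *
    (A1f α φ -
      (5 : ℝ) ^ (-(α + β)) * (|1 - (α + β)| + (α + β) * |(α - β) * (1 + α) / 2| / 5) * A2f α β φ)

/-- `J(α,β,φ;μ₀,μ∞;n)` for real `n > 0`. -/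
def Jf (α β φ μ0 μi : ℝ) (n : ℝ) : ℝ :=
  (α + β)⁻¹ * A1f α φ * (n + (α - β) * (1 - β) / 2) -
    (α + β)⁻¹ * n ^ (-(α + β)) * A2f α β φ * (n + (α - β) * (1 + α) / 2) -
    μ0 * Real.Gamma (2 - β) - μi * iGamma (3 + α) n * n ^ (-1 - (α + β))


open PowerSeries

theorem coeff_X_mul_derivative {R : Type*} [CommSemiring R] (f : R⟦X⟧) (n : ℕ) :
    coeff n (X * d⁄dX R f) = n * coeff n f := by
  cases n with
  | zero => simp
  | succ n => rw [coeff_succ_X_mul, coeff_derivative, mul_comm]; push_cast; ring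

-- The Maclaurin series of `(1 + z) ^ α` and `(1 - z) ^ (-β)`.
def genBinomSeries (α : ℝ) : ℝ⟦X⟧ := mk (genBinom α)

def pochhSeries (β : ℝ) : ℝ⟦X⟧ := mk fun m => pochh β m / m.factorial

theorem genBinom_succ_mul (α : ℝ) (k : ℕ) :
    genBinom α (k + 1) * (k + 1) = (α - k) * genBinom α k := by
  have := k.factorial_pos
  simp only [genBinom, prod_range_succ, Nat.factorial_succ]
  push_cast
  field_simp

theorem pochh_div_factorial_succ_mul (β : ℝ) (m : ℕ) :
    pochh β (m + 1) / (m + 1).factorial * (m + 1) = (β + m) * (pochh β m / m.factorial) := by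
  have := m.factorial_pos
  simp only [pochh, prod_range_succ, Nat.factorial_succ]
  push_cast
  field_simp

theorem derivative_genBinomSeries (α : ℝ) :
    d⁄dX ℝ (genBinomSeries α) + X * d⁄dX ℝ (genBinomSeries α) = C α * genBinomSeries α := by
  ext n
  rw [map_add, coeff_X_mul_derivative, coeff_derivative, coeff_C_mul]
  simp only [genBinomSeries, coeff_mk]
  rw [genBinom_succ_mul]
  ring

theorem derivative_pochhSeries (β : ℝ) :
    d⁄dX ℝ (pochhSeries β) - X * d⁄dX ℝ (pochhSeries β) = C β * pochhSeries β := by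
  ext n
  rw [map_sub, coeff_X_mul_derivative, coeff_derivative, coeff_C_mul]
  simp only [pochhSeries, coeff_mk]
  rw [pochh_div_factorial_succ_mul]
  ring

theorem derivative_genBinomSeries_mul_pochhSeries (α β : ℝ) :
    let F := genBinomSeries α * pochhSeries β
    d⁄dX ℝ F - X * (X * d⁄dX ℝ F) = C (α + β) * F + C (β - α) * (X * F) := by
  intro F
  have hG := derivative_genBinomSeries α
  have hE := derivative_pochhSeries β
  simp only [F, Derivation.leibniz, smul_eq_mul, map_add, map_sub]
  linear_combination (1 - X) * pochhSeries β * hG + (1 + X) * genBinomSeries α * hE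

theorem brAR_one_eq_coeff (α β : ℝ) (n : ℕ) :
    brAR α β 1 n = coeff n (genBinomSeries α * pochhSeries β) := by
  simp only [brAR, one_pow, mul_one, coeff_mul, genBinomSeries, pochhSeries, coeff_mk]
  exact (Nat.sum_antidiagonal_eq_sum_range_succ
    (fun i j => genBinom α i * (pochh β j / j.factorial)) n).symm

theorem brAR_one_recurrence (α β : ℝ) (n : ℕ) :
    (n + 2) * brAR α β 1 (n + 2) = (α + β) * brAR α β 1 (n + 1) + (n + β - α) * brAR α β 1 n := by
  have h := congrArg (coeff (n + 1)) (derivative_genBinomSeries_mul_pochhSeries α β)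
  simp only [map_sub, map_add, add_mul, sub_mul, coeff_C_mul, coeff_succ_X_mul,
    coeff_X_mul_derivative, coeff_derivative] at h
  simp only [brAR_one_eq_coeff]
  push_cast at h
  linear_combination h

theorem brAR_one_zero (α β : ℝ) : brAR α β 1 0 = 1 := by
  simp [brAR, genBinom, pochh]

theorem brAR_one_one (α β : ℝ) : brAR α β 1 1 = α + β := by
  simp [brAR, sum_range_succ, genBinom, pochh]
  ring

section Recurrence

variable {a : ℕ → ℝ} {α β : ℝ}

theorem pos_and_nonneg_add_two_of_recurrence
    (hrec : ∀ n : ℕ, (n + 2) * a (n + 2) = (α + β) * a (n + 1) + (n + β - α) * a n)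
    (hα₀ : 0 ≤ α) (hα₁ : α < 1) (hβ : 0 < β) {n : ℕ} (hn : 1 ≤ n)
    (ha : 0 < a n) (hS : 0 ≤ (n + 1) * a (n + 1) + (n - α) * a n) :
    0 < a (n + 2) ∧ 0 ≤ (n + 3) * a (n + 3) + (n + 2 - α) * a (n + 2) := by
  have hrec₀ := hrec n
  have hrec₁ : (n + 3 : ℝ) * a (n + 3) = (α + β) * a (n + 2) + (n + 1 + β - α) * a (n + 1) := by
    have := hrec (n + 1)
    push_cast at this
    linear_combination this
  have hn' : (1 : ℝ) ≤ n := by exact_mod_cast hn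
  have hsum : 0 < a n + a (n + 1) := by
    have : (n + 1 : ℝ) * (a n + a (n + 1)) =
        (n + 1) * a (n + 1) + (n - α) * a n + (1 + α) * a n := by ring
    have : 0 < (n + 1 : ℝ) * (a n + a (n + 1)) := by rw [this]; positivity
    exact pos_of_mul_pos_right this (by positivity)
  constructor
  · have key : (n + 1) * ((n + 2) * a (n + 2)) = (α + β) * ((n + 1) * a (n + 1) + (n - α) * a n)
        + ((n - α) ^ 2 + (n - α) + β * (1 + α)) * a n := by
      linear_combination (n + 1 : ℝ) * hrec₀
    have hpos : 0 < (n + 1 : ℝ) * ((n + 2) * a (n + 2)) := by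
      rw [key]
      have := mul_nonneg (add_nonneg hα₀ hβ.le) hS
      have := mul_pos (by nlinarith : 0 < (n - α) ^ 2 + (n - α) + β * (1 + α)) ha
      linarith
    exact pos_of_mul_pos_right (pos_of_mul_pos_right hpos (by positivity)) (by positivity)
  · have key : (n + 2) * ((n + 3) * a (n + 3) + (n + 2 - α) * a (n + 2)) =
        (n + 2 + 2 * β) * ((n + 1) * a (n + 1) + (n - α) * a n)
          + β * (α + β + 2) * (a n + a (n + 1)) := by
      linear_combination (n + 2 : ℝ) * hrec₁ + (n + 2 + β) * hrec₀
    have hnonneg : 0 ≤ (n + 2 : ℝ) * ((n + 3) * a (n + 3) + (n + 2 - α) * a (n + 2)) := by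
      rw [key]
      have := mul_nonneg (by positivity : (0 : ℝ) ≤ n + 2 + 2 * β) hS
      have : 0 < β * (α + β + 2) * (a n + a (n + 1)) := by positivity
      linarith
    exact nonneg_of_mul_nonneg_right hnonneg (by positivity)

theorem odd_pos_of_recurrence
    (hrec : ∀ n : ℕ, (n + 2) * a (n + 2) = (α + β) * a (n + 1) + (n + β - α) * a n)
    (hα₀ : 0 ≤ α) (hα₁ : α < 1) (hβ : 0 < β)
    (h₁ : 0 < a 1) (h₂ : 0 ≤ 2 * a 2 + (1 - α) * a 1) (K : ℕ) : 0 < a (2 * K + 1) := by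
  suffices ∀ K : ℕ, 0 < a (2 * K + 1) ∧
      0 ≤ (2 * K + 2) * a (2 * K + 2) + (2 * K + 1 - α) * a (2 * K + 1) from (this K).1
  intro K
  induction K with
  | zero => norm_num [h₁, h₂]
  | succ K ih =>
    obtain ⟨hpos, hS⟩ := pos_and_nonneg_add_two_of_recurrence hrec hα₀ hα₁ hβ (n := 2 * K + 1)
      (by omega) ih.1 (by push_cast; linarith [ih.2])
    rw [show 2 * (K + 1) + 1 = 2 * K + 1 + 2 by ring, show 2 * (K + 1) + 2 = 2 * K + 1 + 3 by ring]
    push_cast at hS ⊢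
    exact ⟨hpos, by linarith⟩

end Recurrence

theorem statement2_general (α β : ℝ) (hα : α ∈ Set.Ioo (0:ℝ) 1) (hβ : β ∈ Set.Ioo (0:ℝ) 1)
    (n : ℕ) (hodd : Odd n) :
    0 < brAR α β 1 n := by
  obtain ⟨K, rfl⟩ := hodd
  have hrec₀ := brAR_one_recurrence α β 0
  rw [brAR_one_zero, brAR_one_one] at hrec₀
  refine odd_pos_of_recurrence (brAR_one_recurrence α β) hα.1.le hα.2 hβ.1 ?_ ?_ K
  · rw [brAR_one_one]; linarith [hα.1, hβ.1]
  · rw [brAR_one_one]; push_cast at hrec₀; nlinarith [hα.1, hβ.1]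

/-- For `α, β ∈ (0,1)` and odd positive `n`, `A_n(α,β,1) > 0`. -/
theorem statement2 (α β : ℝ) (hα : α ∈ Set.Ioo (0:ℝ) 1) (hβ : β ∈ Set.Ioo (0:ℝ) 1)
    (n : ℕ) (hodd : Odd n) (hn : 0 < n) :
    0 < brAR α β 1 n :=
  statement2_general α β hα hβ n hodd

end
end

section
/- Let α ∈ (0,1), β ∈ (0,1], let n ≥ 1 be an odd integer, let θ ∈ [0,π] and set φ := π − θ. Then the inequality |A_n(α,β,e^{iθ})| ≤ A_n(α,β,1) holds if and only if |w_n(α,β,e^{iφ})| ≤ w_n(α,β,−1). -/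
open Real MeasureTheory Set Finset

noncomputable section

/-!
Reading the hypergeometric sum backwards turns it into `A_n`: by the reflection formula
`Γ(α) Γ(1-α) = π / sin(πα)` and `(-n)_k = (-1)^k n! / (n-k)!`, the `k`-th coefficient of `w_n`
is `-π (-1)^(n-k)` times the `(n-k)`-th coefficient of `A_n`. Hence `w_n(x) = -π xⁿ A_n(-1/x)`,
so `|w_n(e^{iφ})| = π |A_n(e^{iθ})|` on the unit circle, while `w_n(-1) = π A_n(1)` for odd `n`.
-/

lemma pochh_succ (a : ℝ) (k : ℕ) : pochh a (k + 1) = pochh a k * (a + k) :=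
  prod_range_succ _ _

lemma pochh_ne_zero {a : ℝ} (ha : ∀ m : ℤ, a ≠ m) (k : ℕ) : pochh a k ≠ 0 :=
  prod_ne_zero_iff.mpr fun j _ h => ha (-j) (by push_cast; linarith)

lemma pochh_neg_natCast {n m : ℕ} (hm : m ≤ n) :
    pochh (-n) m = (-1) ^ m * n.descFactorial m := by
  induction m with
  | zero => simp [pochh]
  | succ k ih =>
    rw [pochh_succ, ih (by omega), Nat.descFactorial_succ, Nat.cast_mul, Nat.cast_sub (by omega)]
    ring

lemma prod_range_sub_eq_mul_pochh (α : ℝ) {n m : ℕ} (hm : m ≤ n) :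
    ∏ j ∈ range n, (α - j) = (∏ j ∈ range (n - m), (α - j)) * pochh (α - n + 1) m := by
  induction m with
  | zero => simp [pochh]
  | succ k ih =>
    rw [ih (by omega), pochh_succ, show n - k = n - (k + 1) + 1 by omega, prod_range_succ,
      Nat.cast_sub hm]
    push_cast
    ring

lemma Gamma_sub_mul_Gamma_one_add_mul_sin {α : ℝ} (hα : ∀ m : ℤ, α ≠ m) (n : ℕ) :
    Gamma (n - α) * Gamma (1 + α) * sin (π * α) = -(-1) ^ n * π * ∏ j ∈ range n, (α - j) := by
  induction n with
  | zero =>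
    have hsin : sin (π * α) ≠ 0 := fun h => by
      obtain ⟨m, hm⟩ := sin_eq_zero_iff.mp h
      exact hα m (mul_left_cancel₀ pi_ne_zero (by linarith))
    have := Gamma_mul_Gamma_one_sub (-α)
    rw [sub_neg_eq_add, mul_neg, sin_neg, div_neg] at this
    simp only [CharP.cast_eq_zero, zero_sub, this, pow_zero, prod_range_zero]
    field_simp
  | succ n ih =>
    have hne : (n : ℝ) - α ≠ 0 := fun h => hα n (by push_cast; linarith)
    rw [Nat.cast_succ, add_sub_right_comm, Gamma_add_one hne, prod_range_succ]
    linear_combination ((n : ℝ) - α) * ih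

open Nat in
lemma wC_coeff_eq {α : ℝ} (hα : ∀ m : ℤ, α ≠ m) (β : ℝ) {n m : ℕ} (hm : m ≤ n) :
    Gamma (n - α) * Gamma (1 + α) * sin (π * α) / n ! *
        (pochh β m * pochh (-n) m / (pochh (α - n + 1) m * m !)) =
      -π * (-1) ^ (n - m) * (genBinom α (n - m) * (pochh β m / m !)) := by
  have hpochh : pochh (α - n + 1) m ≠ 0 :=
    pochh_ne_zero (fun j h => hα (j + n - 1) (by push_cast; linarith)) m
  have hfact : ((n - m) ! * n.descFactorial m : ℝ) = n ! := by
    exact_mod_cast factorial_mul_descFactorial hm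
  have hdesc : (n.descFactorial m : ℝ) ≠ 0 := by
    exact_mod_cast (descFactorial_eq_zero_iff_lt.not.mpr (by omega))
  have hsign : (-1 : ℝ) ^ n = (-1) ^ (n - m) * (-1) ^ m := by
    rw [← pow_add, Nat.sub_add_cancel hm]
  rw [Gamma_sub_mul_Gamma_one_add_mul_sin hα, prod_range_sub_eq_mul_pochh α hm,
    pochh_neg_natCast hm, genBinom, ← hfact, hsign]
  field_simp
  simp [← pow_mul]

lemma wC_eq_neg_pi_mul_pow_mul_brA {α : ℝ} (hα : ∀ m : ℤ, α ≠ m) (β : ℝ) (n : ℕ) {x : ℂ}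
    (hx : x ≠ 0) : wC α β n x = -π * x ^ n * brA α β (-x⁻¹) n := by
  rw [wC, brA, mul_sum, mul_sum, ← sum_range_reflect]
  refine sum_congr rfl fun m hm => ?_
  have hm : m ≤ n := Nat.lt_succ_iff.mp (mem_range.mp hm)
  have hxn : x ^ n = x ^ (n - m) * x ^ m := by rw [← pow_add, Nat.sub_add_cancel hm]
  rw [Nat.add_sub_cancel, ← mul_assoc, ← Complex.ofReal_mul, wC_coeff_eq hα β (Nat.sub_le n m),
    Nat.sub_sub_self hm, hxn, neg_pow x⁻¹, inv_pow]
  push_cast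
  field_simp

lemma ofReal_brAR (α β x : ℝ) (n : ℕ) : (brAR α β x n : ℂ) = brA α β x n := by
  simp [brAR, brA]

lemma ofReal_wR (α β : ℝ) (n : ℕ) (x : ℝ) : (wR α β n x : ℂ) = wC α β n x := by
  simp [wR, wC]

lemma wR_neg_one {α : ℝ} (hα : ∀ m : ℤ, α ≠ m) (β : ℝ) {n : ℕ} (hn : Odd n) :
    wR α β n (-1) = π * brAR α β 1 n := by
  apply Complex.ofReal_injective
  rw [ofReal_wR, Complex.ofReal_mul, ofReal_brAR, Complex.ofReal_neg, Complex.ofReal_one,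
    wC_eq_neg_pi_mul_pow_mul_brA hα β n (by norm_num), hn.neg_one_pow]
  norm_num

lemma norm_wC_of_norm_eq_one {α : ℝ} (hα : ∀ m : ℤ, α ≠ m) (β : ℝ) (n : ℕ) {x : ℂ}
    (hx : ‖x‖ = 1) : ‖wC α β n x‖ = π * ‖brA α β (-x⁻¹) n‖ := by
  rw [wC_eq_neg_pi_mul_pow_mul_brA hα β n (norm_ne_zero_iff.mp (by simp [hx])), norm_mul,
    norm_mul, norm_pow, hx, one_pow, mul_one, norm_neg, Complex.norm_real,
    Real.norm_of_nonneg pi_pos.le]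

theorem statement4_general (α β : ℝ) (hα : α ∈ Set.Ioo (0:ℝ) 1)
    (n : ℕ) (hodd : Odd n) (θ : ℝ) :
    ‖brA α β (Complex.exp (θ * Complex.I)) n‖ ≤ brAR α β 1 n ↔
      ‖wC α β n (Complex.exp ((π - θ) * Complex.I))‖ ≤ wR α β n (-1) := by
  have hα_notInt : ∀ m : ℤ, α ≠ m := fun m h => by
    obtain ⟨h0, h1⟩ := hα
    rw [h] at h0 h1
    norm_cast at h0 h1
    omega
  have hnorm : ‖Complex.exp ((π - θ) * Complex.I)‖ = 1 := by
    simpa using Complex.norm_exp_ofReal_mul_I (π - θ)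
  have hrot : -(Complex.exp ((π - θ) * Complex.I))⁻¹ = Complex.exp (θ * Complex.I) := by
    rw [← Complex.exp_neg, sub_mul, neg_sub, Complex.exp_sub, Complex.exp_pi_mul_I]
    ring
  rw [norm_wC_of_norm_eq_one hα_notInt β n hnorm, hrot, wR_neg_one hα_notInt β hodd,
    mul_le_mul_iff_right₀ pi_pos]

/-- With `φ = π - θ`, Brannan's inequality is equivalent to `|w_n(α,β,e^{iφ})| ≤ w_n(α,β,-1)`. -/
theorem statement4 (α β : ℝ) (hα : α ∈ Set.Ioo (0:ℝ) 1) (hβ : β ∈ Set.Ioc (0:ℝ) 1)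
    (n : ℕ) (hn : 1 ≤ n) (hodd : Odd n) (θ : ℝ) (hθ : θ ∈ Set.Icc (0:ℝ) π) :
    ‖brA α β (Complex.exp (θ * Complex.I)) n‖ ≤ brAR α β 1 n ↔
      ‖wC α β n (Complex.exp ((π - θ) * Complex.I))‖ ≤ wR α β n (-1) :=
  statement4_general α β hα n hodd θ

end
end

section
/- Let α, β ∈ (0,1) with β ≤ α, let φ ∈ (0,π), and let μ0, μ∞ ≥ 0. Set ν := α+β, c1 := (α−β)(1−β)/2, c2 := (α−β)(1+α)/2, and define J(n) := (1/ν)·A1(α,φ)·(n + c1) − (1/ν)·n^{−ν}·A2(α,β,φ)·(n + c2) − μ0·Γ(2−β) − μ∞·Γ(3+α,n)·n^{−1−ν} for real n > 0. Then for every real n ≥ 5 the function J is differentiable at n and J′(n) ≥ F1(α,β,φ), where F1(α,β,φ) := (1/ν)·[A1(α,φ) − max(1−ν, 0)·5^{−ν}·A2(α,β,φ)]. -/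
open Real MeasureTheory Set Finset

noncomputable section

/-! Differentiating term by term, with `d/dn Γ(3+α,n) = -n^{2+α} e^{-n}`,
`J'(n) = A₁/ν - (A₂/ν)((1-ν) n^{-ν} - ν c₂ n^{-ν-1}) + μ∞ · (nonnegative terms)`.
Since `A₂ ≥ 0` and `c₂ ≥ 0` (this is where `β ≤ α` enters), the bound reduces to
`(1-ν) n^{-ν} ≤ max(1-ν,0) 5^{-ν}` for `n ≥ 5`. -/

lemma hasDerivAt_iGamma {a x : ℝ} (ha : 0 < a) (hx : 0 < x) :
    HasDerivAt (iGamma a) (-(x ^ (a - 1) * exp (-x))) x := by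
  set f : ℝ → ℝ := fun t => t ^ (a - 1) * exp (-t)
  have hint : IntegrableOn f (Ioi 0) :=
    (GammaIntegral_convergent ha).congr_fun (fun _ _ => mul_comm _ _) measurableSet_Ioi
  have hcont : ContinuousOn f (Ioi 0) := fun t ht =>
    ((continuousAt_rpow_const t (a - 1) (Or.inl (ne_of_gt ht))).mul
      (continuous_exp.comp continuous_neg).continuousAt).continuousWithinAt
  have heq : EqOn (iGamma a) (fun y => iGamma a 0 - ∫ t in (0 : ℝ)..y, f t) (Ioi 0) :=
    fun y hy => eq_sub_of_add_eq' <| intervalIntegral.integral_interval_add_Ioi hint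
      (hint.mono_set (Ioi_subset_Ioi (le_of_lt hy)))
  have hII : IntervalIntegrable f volume 0 x :=
    (intervalIntegrable_iff_integrableOn_Ioc_of_le hx.le).2 (hint.mono_set Ioc_subset_Ioi_self)
  have hFTC := intervalIntegral.integral_hasDerivAt_right hII
    (hcont.stronglyMeasurableAtFilter isOpen_Ioi x hx) (hcont.continuousAt (Ioi_mem_nhds hx))
  exact (hFTC.const_sub _).congr_of_eventuallyEq (Filter.eventuallyEq_of_mem (Ioi_mem_nhds hx) heq)

lemma iGamma_nonneg (a : ℝ) {x : ℝ} (hx : 0 ≤ x) : 0 ≤ iGamma a x :=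
  setIntegral_nonneg measurableSet_Ioi fun _ ht =>
    mul_nonneg (rpow_nonneg (hx.trans (le_of_lt ht)) _) (exp_nonneg _)

lemma A2f_nonneg {α β φ : ℝ} (hα : α ≤ 1) (hβ : 0 < β) (hφ : φ ∈ Ioo 0 (2 * π)) :
    0 ≤ A2f α β φ := by
  have hsin : 0 < 2 * sin (φ / 2) := by
    have := sin_pos_of_pos_of_lt_pi (x := φ / 2) (by linarith [hφ.1]) (by linarith [hφ.2])
    linarith
  have hsin_le : 2 * sin (φ / 2) ≤ 2 := by linarith [sin_le_one (φ / 2)]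
  have hpow : (2 : ℝ) ^ (-β) ≤ (2 * sin (φ / 2)) ^ (-β) :=
    rpow_le_rpow_of_nonpos hsin hsin_le (by linarith)
  have hΓ := Gamma_pos_of_pos hβ
  have h1α : 0 ≤ 1 - α := by linarith
  have hdiff : 0 ≤ (2 * sin (φ / 2)) ^ (-β) - (2 : ℝ) ^ (-β) := by linarith
  unfold A2f
  positivity

lemma mul_rpow_neg_le_max_mul {c ν a x : ℝ} (hν : 0 ≤ ν) (ha : 0 < a) (hax : a ≤ x) :
    c * x ^ (-ν) ≤ max c 0 * a ^ (-ν) :=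
  calc c * x ^ (-ν) ≤ max c 0 * x ^ (-ν) :=
        mul_le_mul_of_nonneg_right (le_max_left _ _) (rpow_nonneg (ha.le.trans hax) _)
    _ ≤ max c 0 * a ^ (-ν) :=
        mul_le_mul_of_nonneg_left (rpow_le_rpow_of_nonpos ha hax (by linarith)) (le_max_right _ _)

lemma hasDerivAt_Jf {α β φ μ0 μi n : ℝ} (hα : 0 < 3 + α) (hn : 0 < n) :
    HasDerivAt (Jf α β φ μ0 μi)
      ((α + β)⁻¹ * A1f α φ
        - (α + β)⁻¹ * A2f α β φ * ((1 - (α + β)) * n ^ (-(α + β))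
            - (α + β) * ((α - β) * (1 + α) / 2) * n ^ (-(α + β) - 1))
        + μi * (n ^ (3 + α - 1) * exp (-n) * n ^ (-1 - (α + β))
            + (1 + (α + β)) * iGamma (3 + α) n * n ^ (-1 - (α + β) - 1))) n := by
  have hA1 : HasDerivAt (fun x : ℝ => (α + β)⁻¹ * A1f α φ * (x + (α - β) * (1 - β) / 2))
      ((α + β)⁻¹ * A1f α φ * 1) n :=
    ((hasDerivAt_id n).add_const _).const_mul _
  have hA2 := ((((hasDerivAt_rpow_const (p := -(α + β)) (Or.inl hn.ne')).const_mul
    (α + β)⁻¹).mul_const (A2f α β φ)).mul ((hasDerivAt_id n).add_const ((α - β) * (1 + α) / 2)))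
  have hΓ := ((hasDerivAt_iGamma hα hn).const_mul μi).mul
    (hasDerivAt_rpow_const (p := -1 - (α + β)) (Or.inl hn.ne'))
  have hpow : n ^ (-(α + β)) = n ^ (-(α + β) - 1) * n := by
    rw [← rpow_add_one hn.ne', sub_add_cancel]
  refine HasDerivAt.congr_deriv (f := Jf α β φ μ0 μi)
    (((hA1.sub hA2).sub_const (μ0 * Gamma (2 - β))).sub hΓ) ?_
  rw [id, hpow]
  ring

theorem statement15_general (α β : ℝ) (hα : α ∈ Set.Ioo (0:ℝ) 1) (hβ : β ∈ Set.Ioo (0:ℝ) 1)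
    (hba : β ≤ α) (φ : ℝ) (hφ : φ ∈ Set.Ioo (0:ℝ) π)
    (μ0 μi : ℝ) (hμi : 0 ≤ μi) (n : ℝ) (hn : 5 ≤ n) :
    DifferentiableAt ℝ (Jf α β φ μ0 μi) n ∧ deriv (Jf α β φ μ0 μi) n ≥ F1f α β φ := by
  obtain ⟨hα0, hα1⟩ := hα
  have hn0 : 0 < n := by linarith
  have hν : 0 < α + β := by linarith [hβ.1]
  have hJ : HasDerivAt (Jf α β φ μ0 μi) _ n := hasDerivAt_Jf (by linarith) hn0
  refine ⟨hJ.differentiableAt, ?_⟩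
  have hA2 := A2f_nonneg hα1.le hβ.1 ⟨hφ.1, by linarith [hφ.2, pi_pos]⟩
  have hdrift : 0 ≤ (α + β) * ((α - β) * (1 + α) / 2) * n ^ (-(α + β) - 1) := by
    have : 0 ≤ α - β := by linarith
    positivity
  have htail : 0 ≤ μi * (n ^ (3 + α - 1) * exp (-n) * n ^ (-1 - (α + β))
      + (1 + (α + β)) * iGamma (3 + α) n * n ^ (-1 - (α + β) - 1)) := by
    have := iGamma_nonneg (3 + α) hn0.le
    positivity
  have hbound := mul_rpow_neg_le_max_mul (c := 1 - (α + β)) hν.le (by norm_num) hn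
  rw [hJ.deriv, ge_iff_le]
  calc F1f α β φ
      = (α + β)⁻¹ * A1f α φ - (α + β)⁻¹ * A2f α β φ * (max (1 - (α + β)) 0 * 5 ^ (-(α + β))) := by
        unfold F1f; ring
    _ ≤ _ := by gcongr; linarith
    _ ≤ _ := le_add_of_nonneg_right htail

/-- Case `β ≤ α`: `J` is differentiable on `[5,∞)` with `J'(n) ≥ F₁(α,β,φ)`. -/
theorem statement15 (α β : ℝ) (hα : α ∈ Set.Ioo (0:ℝ) 1) (hβ : β ∈ Set.Ioo (0:ℝ) 1)
    (hba : β ≤ α) (φ : ℝ) (hφ : φ ∈ Set.Ioo (0:ℝ) π)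
    (μ0 μi : ℝ) (hμ0 : 0 ≤ μ0) (hμi : 0 ≤ μi) (n : ℝ) (hn : 5 ≤ n) :
    DifferentiableAt ℝ (Jf α β φ μ0 μi) n ∧ deriv (Jf α β φ μ0 μi) n ≥ F1f α β φ :=
  statement15_general α β hα hβ hba φ hφ μ0 μi hμi n hn

end
end

section
/- Let 0 < α ≤ β < 1 and let n ≥ 1 be an integer. Then A_n(α,β,1) > |A_n(α,β,−1)|. Moreover, if α < β then A_n(α,β,−1) = Γ(n−α+β)/(Γ(β−α)·n!) ≥ 0, where Γ is the Gamma function. -/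
open Real MeasureTheory Set Finset

noncomputable section

lemma pochh_nonneg {a : ℝ} (ha : 0 ≤ a) (k : ℕ) : 0 ≤ pochh a k :=
  prod_nonneg fun j _ => add_nonneg ha j.cast_nonneg

lemma pochh_pos {a : ℝ} (ha : 0 < a) (k : ℕ) : 0 < pochh a k :=
  prod_pos fun j _ => add_pos_of_pos_of_nonneg ha j.cast_nonneg

lemma genBinom_eq_choose (r : ℝ) (k : ℕ) : genBinom r k = Ring.choose r k := by
  have h := Ring.descPochhammer_eq_factorial_smul_choose r k
  rw [← Polynomial.aeval_eq_smeval, Polynomial.aeval_def, Polynomial.eval₂_eq_eval_map,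
    descPochhammer_map, descPochhammer_eval_eq_prod_range, nsmul_eq_mul] at h
  rw [genBinom, h, mul_div_cancel_left₀ _ (by positivity)]

lemma genBinom_add (r s : ℝ) (n : ℕ) :
    genBinom (r + s) n = ∑ k ∈ range (n + 1), genBinom r k * genBinom s (n - k) := by
  simp only [genBinom_eq_choose]
  rw [Ring.add_choose_eq n (Commute.all r s), Nat.sum_antidiagonal_eq_sum_range_succ_mk]

lemma pochh_div_factorial (a : ℝ) (k : ℕ) :
    pochh a k / k.factorial = (-1) ^ k * genBinom (-a) k := by
  have h : pochh a k = (-1) ^ k * ∏ j ∈ range k, (-a - j) := by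
    rw [pochh, ← card_range k, ← prod_const, card_range, ← prod_mul_distrib]
    exact prod_congr rfl fun j _ => by ring
  rw [h, genBinom, mul_div_assoc]

lemma genBinom_succ (α : ℝ) (k : ℕ) :
    genBinom α (k + 1) = (-1) ^ k * α * pochh (1 - α) k / (k + 1).factorial := by
  have h : ∏ j ∈ range k, (α - (j + 1 : ℕ)) = (-1) ^ k * pochh (1 - α) k := by
    rw [pochh, ← card_range k, ← prod_const, card_range, ← prod_mul_distrib]
    exact prod_congr rfl fun j _ => by push_cast; ring
  rw [genBinom, prod_range_succ', h]
  push_cast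
  ring

lemma brAR_neg_one (α β : ℝ) (n : ℕ) :
    brAR α β (-1) n = pochh (β - α) n / n.factorial := by
  have hsign : ∀ k ∈ range (n + 1), (-1 : ℝ) ^ (n - k) * (-1) ^ k = (-1) ^ n := fun k hk => by
    rw [← pow_add, Nat.sub_add_cancel (Nat.lt_succ_iff.mp (mem_range.mp hk))]
  rw [pochh_div_factorial, neg_sub, sub_eq_add_neg, genBinom_add, mul_sum, brAR]
  refine sum_congr rfl fun k hk => ?_
  rw [pochh_div_factorial, ← hsign k hk]
  ring

lemma Real.Gamma_add_nat_eq_pochh_mul {x : ℝ} (hx : ∀ k : ℕ, x ≠ -k) (m : ℕ) :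
    Gamma (x + m) = pochh x m * Gamma x := by
  induction m with
  | zero => simp [pochh]
  | succ m ih =>
    have hxm : x + m ≠ 0 := fun h => hx m (eq_neg_of_add_eq_zero_left h)
    rw [Nat.cast_succ, ← add_assoc, Gamma_add_one hxm, ih, pochh_succ]
    ring

lemma brAR_one_sub_brAR_neg_one (α β : ℝ) (n : ℕ) :
    brAR α β 1 n - brAR α β (-1) n = ∑ k ∈ range (n + 1),
      genBinom α k * (pochh β (n - k) / (n - k).factorial) * (1 - (-1) ^ k) := by
  rw [brAR, brAR, ← sum_sub_distrib]
  exact sum_congr rfl fun k _ => by ring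

lemma brAR_neg_one_lt_brAR_one {α β : ℝ} (hα : 0 < α) (hα1 : α ≤ 1) (hβ : 0 < β) {n : ℕ}
    (hn : 1 ≤ n) : brAR α β (-1) n < brAR α β 1 n := by
  rw [← sub_pos, brAR_one_sub_brAR_neg_one]
  refine sum_pos' (fun k _ => ?_) ⟨1, mem_range.2 (by omega), ?_⟩
  · rcases Nat.even_or_odd k with hk | ⟨j, rfl⟩
    · simp [hk.neg_one_pow]
    · rw [genBinom_succ, Even.neg_one_pow ⟨j, two_mul j⟩, Odd.neg_one_pow ⟨j, rfl⟩]
      have := pochh_nonneg (sub_nonneg.2 hα1) (2 * j)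
      have := pochh_nonneg hβ.le (n - (2 * j + 1))
      norm_num
      positivity
  · have := pochh_pos hβ (n - 1)
    simp only [genBinom, prod_range_one]
    norm_num
    positivity

/-- For `0 < α ≤ β < 1`, `A_n(α,β,1) > |A_n(α,β,-1)|`; moreover for `α < β`,
`A_n(α,β,-1) = Γ(n-α+β)/(Γ(β-α) n!) ≥ 0`. -/
theorem statement19 (α β : ℝ) (h0 : 0 < α) (hab : α ≤ β) (hb1 : β < 1)
    (n : ℕ) (hn : 1 ≤ n) :
    |brAR α β (-1) n| < brAR α β 1 n ∧
      (α < β →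
        brAR α β (-1) n = Real.Gamma ((n : ℝ) - α + β) / (Real.Gamma (β - α) * Nat.factorial n) ∧
          0 ≤ brAR α β (-1) n) := by
  have hA := brAR_neg_one α β n
  have hA_nonneg : 0 ≤ brAR α β (-1) n :=
    hA ▸ div_nonneg (pochh_nonneg (sub_nonneg.2 hab) n) (by positivity)
  refine ⟨?_, fun hlt => ⟨?_, hA_nonneg⟩⟩
  · rw [abs_of_nonneg hA_nonneg]
    exact brAR_neg_one_lt_brAR_one h0 (by linarith) (by linarith) hn
  · have hΓ : Gamma (β - α) ≠ 0 := (Gamma_pos_of_pos (sub_pos.2 hlt)).ne'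
    have hx : ∀ k : ℕ, β - α ≠ -k := fun k h => by linarith [k.cast_nonneg (α := ℝ)]
    rw [hA, show (n : ℝ) - α + β = β - α + n by ring, Gamma_add_nat_eq_pochh_mul hx]
    field_simp

end
end
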